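/- Let f ∈ S be a nonzero homogeneous polynomial of degree d ≥ 1. Then the ℂ-vector space { η ∈ Ω^n_d : f divides every coefficient of df ∧ η } is the internal direct sum of its two subspaces { h·ω_n : h ∈ S_{d−n−1} } and { η ∈ Ω^n_d : df ∧ η = 0 }. -/

import Mathlib

/-!
Wedging with `df` turns an `n`-form `η = Σ a_i dx_0∧…∧\hat{dx_i}∧…∧dx_n` into
`(Σ ±∂_i f·a_i) ω'_n`, and by Euler's identity `df ∧ h ω_n = d·f·h ω'_n`. So if `f` divides
`df ∧ η = c ω'_n`, then `c = f h` with `h` homogeneous of degree `d − n − 1` (homogeneous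
components of `f·g` are `f` times those of `g`), and `η − (h/d) ω_n` is killed by `df`.
The sum is direct since `df ∧ h ω_n = 0` forces `f h = 0`, hence `h = 0`.
-/

open scoped TensorProduct

set_option synthInstance.maxHeartbeats 1000000
set_option maxHeartbeats 2000000

noncomputable section

/-- The graded polynomial ring `S = ℂ[x_0,…,x_n]`. -/
abbrev SP (n : ℕ) := MvPolynomial (Fin (n + 1)) ℂ

/-- The exterior algebra over `ℂ` on the span of `dx_0,…,dx_n`. -/
abbrev Lam (n : ℕ) := ExteriorAlgebra ℂ (Fin (n + 1) → ℂ)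

/-- The algebra `Ω` of polynomial differential forms on `ℂ^{n+1}`. -/
abbrev Om (n : ℕ) := SP n ⊗[ℂ] Lam n


/-- Helper instance. -/
instance omSubAddCommGroup (n : ℕ) (A : Submodule ℂ (Om n)) : AddCommGroup ↥A :=
  inferInstance

/-- The basic one-form `dx_i` (the exterior algebra part). -/
def lamdx (n : ℕ) (i : Fin (n + 1)) : Lam n :=
  ExteriorAlgebra.ι ℂ (Pi.single i 1)

/-- `dx_0 ∧ dx_1 ∧ … ∧ dx_n`, i.e. `ω'_n` (exterior algebra part). -/
def topLam (n : ℕ) : Lam n :=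
  (List.ofFn fun i : Fin (n + 1) => lamdx n i).prod

/-- `dx_0 ∧ … ∧ dx_{i-1} ∧ dx_{i+1} ∧ … ∧ dx_n` (exterior algebra part). -/
def omitLam (n : ℕ) (i : Fin (n + 1)) : Lam n :=
  (List.ofFn fun j : Fin n => lamdx n (i.succAbove j)).prod

/-- The one-form `df = Σ_i (∂f/∂x_i)·dx_i`. -/
def oneForm (n : ℕ) (f : SP n) : Om n :=
  ∑ i, (MvPolynomial.pderiv i f) ⊗ₜ[ℂ] lamdx n i

/-- The exterior derivative `d : Ω → Ω` (as a `ℂ`-linear map), sending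
`a·dx_{i_1}∧…∧dx_{i_j}` to `Σ_i (∂a/∂x_i)·dx_i∧dx_{i_1}∧…∧dx_{i_j}`. -/
def extd (n : ℕ) : Om n →ₗ[ℂ] Om n :=
  ∑ i : Fin (n + 1),
    TensorProduct.map (MvPolynomial.pderiv i).toLinearMap
      (LinearMap.mulLeft ℂ (lamdx n i))

/-- The `ℂ`-linear map `r ↦ ω(r) = Σ_i (−1)^i·r_i·dx_0∧…∧\hat{dx_i}∧…∧dx_n`. -/
def omegaR (n : ℕ) : (Fin (n + 1) → SP n) →ₗ[ℂ] Om n :=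
  ∑ i : Fin (n + 1), ((-1 : ℂ) ^ (i : ℕ)) •
    (((TensorProduct.mk ℂ (SP n) (Lam n)).flip (omitLam n i)).comp
      (LinearMap.proj (R := ℂ) i))

/-- The Euler form `ω_n = Σ_i (−1)^i·x_i·dx_0∧…∧\hat{dx_i}∧…∧dx_n`. -/
def eulerForm (n : ℕ) : Om n :=
  omegaR n fun i => MvPolynomial.X i

/-- `S_q`, the homogeneous component of degree `q ∈ ℤ` of `S` (zero for `q < 0`). -/
def Shom (n : ℕ) (q : ℤ) : Submodule ℂ (SP n) :=
  Submodule.span ℂ {a : SP n | ∃ m : ℕ, (m : ℤ) = q ∧ a.IsHomogeneous m}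

/-- `Ω^j_q`: the span of the forms `a·dx_{i_1}∧…∧dx_{i_j}` with `i_1 < … < i_j`
and `a ∈ S_{q−j}`. -/
def OmegaComp (n : ℕ) (j q : ℤ) : Submodule ℂ (Om n) :=
  Submodule.span ℂ
    { w | ∃ (m : ℕ) (a : SP n) (s : Fin m → Fin (n + 1)),
        (m : ℤ) = j ∧ a ∈ Shom n (q - j) ∧ StrictMono s ∧
        w = a ⊗ₜ[ℂ] (List.ofFn fun t => lamdx n (s t)).prod }

/-- `Ω^j`: the span of the forms `a·dx_{i_1}∧…∧dx_{i_j}` with `i_1 < … < i_j`. -/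
def OmegaJ (n : ℕ) (j : ℕ) : Submodule ℂ (Om n) :=
  Submodule.span ℂ
    { w | ∃ (a : SP n) (s : Fin j → Fin (n + 1)), StrictMono s ∧
        w = a ⊗ₜ[ℂ] (List.ofFn fun t => lamdx n (s t)).prod }


open MvPolynomial ExteriorAlgebra

namespace MvPolynomial

variable {σ R : Type*} [CommSemiring R]

attribute [local instance] gradedAlgebra in
theorem homogeneousComponent_mul_of_isHomogeneous_left {d m : ℕ} {f : MvPolynomial σ R}
    (hf : f.IsHomogeneous d) (g : MvPolynomial σ R) :
    homogeneousComponent m (f * g) =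
      if d ≤ m then f * homogeneousComponent (m - d) g else 0 := by
  simp only [← decomposition.decompose'_apply]
  exact DirectSum.coe_decompose_mul_of_left_mem (homogeneousSubmodule σ R) m hf

end MvPolynomial

theorem StrictMono.exists_eq_succAbove {n : ℕ} {s : Fin n → Fin (n + 1)} (hs : StrictMono s) :
    ∃ i : Fin (n + 1), s = i.succAbove := by
  obtain ⟨i, hi⟩ : ∃ i, i ∉ Set.range s := by
    by_contra! h
    simpa using Fintype.card_le_of_surjective s h
  refine ⟨i, (hs.range_inj (Fin.strictMono_succAbove i)).mp ?_⟩
  rw [Fin.range_succAbove]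
  refine Set.eq_of_subset_of_ncard_le (fun x hx h => hi (h ▸ hx)) ?_ (Set.toFinite _)
  rw [Set.ncard_compl, Set.ncard_singleton, Set.ncard_range_of_injective hs.injective]
  simp

section Forms

variable {n : ℕ}

theorem topLam_eq_ιMulti :
    topLam n = ιMulti ℂ (n + 1) fun k => (Pi.single k 1 : Fin (n + 1) → ℂ) := by
  rw [ιMulti_apply]; rfl

theorem lamdx_mul_omitLam_of_ne {i j : Fin (n + 1)} (hj : j ≠ i) :
    lamdx n j * omitLam n i = 0 := by
  obtain ⟨k, rfl⟩ := Fin.exists_succAbove_eq hj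
  simpa [lamdx, omitLam] using
    ι_mul_prod_list (R := ℂ) (fun t : Fin n => (Pi.single (i.succAbove t) 1 : Fin (n + 1) → ℂ)) k

theorem lamdx_mul_omitLam_self (i : Fin (n + 1)) :
    lamdx n i * omitLam n i = (-1 : ℂ) ^ (i : ℕ) • topLam n := by
  -- `dx_i ∧ dx_0 ∧ … ∧ \hat{dx_i} ∧ … ∧ dx_n` is `ω'_n` permuted by the cycle `(0 1 … i)⁻¹`.
  have hcycle : lamdx n i * omitLam n i =
      ιMulti ℂ (n + 1) ((fun k => (Pi.single k 1 : Fin (n + 1) → ℂ)) ∘ i.cycleRange.symm) := by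
    rw [ιMulti_apply, List.ofFn_succ]
    simp only [List.prod_cons, Function.comp_apply, Fin.cycleRange_symm_zero,
      Fin.cycleRange_symm_succ]
    rfl
  rw [hcycle, AlternatingMap.map_perm, ← topLam_eq_ιMulti, Equiv.Perm.sign_symm,
    Fin.sign_cycleRange, Units.smul_def, ← Int.cast_smul_eq_zsmul ℂ]
  push_cast
  rfl

/-- The coefficient of `dx_0 ∧ … ∧ dx_n`, as the extension of the determinant. -/
def topCoeffLam (n : ℕ) : Lam n →ₗ[ℂ] ℂ :=
  liftAlternating (Pi.single (n + 1) Matrix.detRowAlternating)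

theorem topCoeffLam_topLam : topCoeffLam n (topLam n) = 1 := by
  rw [topLam_eq_ιMulti, topCoeffLam, liftAlternating_apply_ιMulti, Pi.single_eq_same]
  show Matrix.det (Matrix.of fun k : Fin (n + 1) => (Pi.single k 1 : Fin (n + 1) → ℂ)) = 1
  convert Matrix.det_one (R := ℂ) (n := Fin (n + 1))
  ext i j
  simp [Matrix.one_apply, Pi.single_apply, eq_comm]

def topCoeff (n : ℕ) : Om n →ₗ[ℂ] SP n :=
  (TensorProduct.rid ℂ (SP n)).toLinearMap ∘ₗ (topCoeffLam n).lTensor (SP n)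

theorem topCoeff_tmul (a : SP n) (u : Lam n) : topCoeff n (a ⊗ₜ u) = topCoeffLam n u • a := by
  simp [topCoeff]

theorem topCoeff_tmul_topLam (a : SP n) : topCoeff n (a ⊗ₜ topLam n) = a := by
  rw [topCoeff_tmul, topCoeffLam_topLam, one_smul]

theorem topCoeff_tmul_one_mul (f : SP n) (w : Om n) :
    topCoeff n ((f ⊗ₜ[ℂ] (1 : Lam n)) * w) = f * topCoeff n w := by
  induction w using TensorProduct.induction_on with
  | zero => simp
  | tmul a u => rw [Algebra.TensorProduct.tmul_mul_tmul, one_mul, topCoeff_tmul, topCoeff_tmul,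
      mul_smul_comm]
  | add x y hx hy => rw [mul_add, map_add, hx, hy, map_add, mul_add]

end Forms

section Wedge

variable {n : ℕ}

theorem oneForm_mul_tmul_omitLam (f a : SP n) (i : Fin (n + 1)) :
    oneForm n f * (a ⊗ₜ omitLam n i) = (-1 : ℂ) ^ (i : ℕ) • ((pderiv i f * a) ⊗ₜ topLam n) := by
  simp only [oneForm, Finset.sum_mul, Algebra.TensorProduct.tmul_mul_tmul]
  rw [Finset.sum_eq_single_of_mem i (Finset.mem_univ i)
      fun j _ hj => by rw [lamdx_mul_omitLam_of_ne hj, TensorProduct.tmul_zero],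
    lamdx_mul_omitLam_self, TensorProduct.tmul_smul]

/-- `g ↦ g·ω_n`. -/
def mulEulerForm (n : ℕ) : SP n →ₗ[ℂ] Om n :=
  (omegaR n).comp (LinearMap.pi fun i => LinearMap.mulRight ℂ (X i))

theorem mulEulerForm_apply (g : SP n) :
    mulEulerForm n g = ∑ i : Fin (n + 1), (-1 : ℂ) ^ (i : ℕ) • ((g * X i) ⊗ₜ omitLam n i) := by
  simp [mulEulerForm, omegaR]

/-- Euler's identity `Σ x_i ∂_i f = d·f`. -/
theorem oneForm_mul_mulEulerForm {d : ℕ} {f : SP n} (hf : f.IsHomogeneous d) (g : SP n) :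
    oneForm n f * mulEulerForm n g = (d : ℂ) • ((f * g) ⊗ₜ topLam n) := by
  have hsign (i : Fin (n + 1)) : (-1 : ℂ) ^ (i : ℕ) * (-1) ^ (i : ℕ) = 1 := by
    rw [← mul_pow, neg_one_mul, neg_neg, one_pow]
  simp only [mulEulerForm_apply, Finset.mul_sum, mul_smul_comm, oneForm_mul_tmul_omitLam,
    smul_smul, hsign, one_smul, ← TensorProduct.sum_tmul]
  rw [TensorProduct.smul_tmul', ← smul_mul_assoc, Nat.cast_smul_eq_nsmul, ← hf.sum_X_mul_pderiv,
    Finset.sum_mul]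
  congr 1
  exact Finset.sum_congr rfl fun i _ => by ring

end Wedge

section Graded

variable {n : ℕ}

theorem Shom_natCast (m : ℕ) : Shom n m = homogeneousSubmodule (Fin (n + 1)) ℂ m := by
  rw [Shom, ← Submodule.span_eq (homogeneousSubmodule (Fin (n + 1)) ℂ m)]
  congr 1
  ext a
  simp [mem_homogeneousSubmodule]

theorem Shom_eq_bot {q : ℤ} (hq : q < 0) : Shom n q = ⊥ := by
  rw [Shom, Submodule.span_eq_bot]
  rintro a ⟨m, rfl, -⟩
  omega

theorem mem_Shom_of_isHomogeneous {q : ℤ} {m : ℕ} (hm : (m : ℤ) = q) {a : SP n}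
    (ha : a.IsHomogeneous m) : a ∈ Shom n q :=
  Submodule.subset_span ⟨m, hm, ha⟩

theorem eq_zero_or_isHomogeneous_of_mem_Shom {q : ℤ} {a : SP n} (ha : a ∈ Shom n q) :
    a = 0 ∨ ∃ m : ℕ, (m : ℤ) = q ∧ a.IsHomogeneous m := by
  rcases lt_or_ge q 0 with hq | hq
  · rw [Shom_eq_bot hq, Submodule.mem_bot] at ha
    exact Or.inl ha
  · lift q to ℕ using hq
    rw [Shom_natCast, mem_homogeneousSubmodule] at ha
    exact Or.inr ⟨q, rfl, ha⟩

theorem mul_mem_Shom {q : ℤ} {k : ℕ} {a b : SP n} (ha : a ∈ Shom n q)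
    (hb : b.IsHomogeneous k) : a * b ∈ Shom n (q + k) := by
  rcases eq_zero_or_isHomogeneous_of_mem_Shom ha with rfl | ⟨m, rfl, ha'⟩
  · rw [zero_mul]; exact zero_mem _
  · exact mem_Shom_of_isHomogeneous (by push_cast; ring) (ha'.mul hb)

theorem exists_mem_Shom_eq_mul {q : ℤ} {d : ℕ} {f c g : SP n} (hf : f.IsHomogeneous d)
    (hc : c ∈ Shom n q) (hcg : c = f * g) : ∃ h ∈ Shom n (q - d), c = f * h := by
  rcases eq_zero_or_isHomogeneous_of_mem_Shom hc with rfl | ⟨m, rfl, hcm⟩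
  · exact ⟨0, zero_mem _, (mul_zero f).symm⟩
  rw [← homogeneousComponent_eq_self hcm, hcg, homogeneousComponent_mul_of_isHomogeneous_left hf]
  split_ifs with hdm
  · exact ⟨_, mem_Shom_of_isHomogeneous (by omega) (homogeneousComponent_isHomogeneous _ _), rfl⟩
  · exact ⟨0, zero_mem _, (mul_zero f).symm⟩

end Graded

section OmegaComp

variable {n : ℕ}

theorem tmul_omitLam_mem_OmegaComp {q : ℤ} {a : SP n} (ha : a ∈ Shom n (q - n))
    (i : Fin (n + 1)) : a ⊗ₜ omitLam n i ∈ OmegaComp n n q :=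
  Submodule.subset_span ⟨n, a, i.succAbove, rfl, ha, Fin.strictMono_succAbove i, rfl⟩

theorem map_mulEulerForm_le_OmegaComp (d : ℕ) :
    (Shom n ((d : ℤ) - n - 1)).map (mulEulerForm n) ≤ OmegaComp n n d := by
  rintro _ ⟨g, hg, rfl⟩
  rw [mulEulerForm_apply]
  refine Submodule.sum_mem _ fun i _ => Submodule.smul_mem _ _ ?_
  refine tmul_omitLam_mem_OmegaComp ?_ i
  convert mul_mem_Shom hg (isHomogeneous_X ℂ i) using 2
  push_cast; ring

theorem exists_oneForm_mul_eq_tmul_topLam {q : ℤ} {d : ℕ} (hd : 1 ≤ d) {f : SP n}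
    (hf : f.IsHomogeneous d) {η : Om n} (hη : η ∈ OmegaComp n n q) :
    ∃ c ∈ Shom n (q + d - n - 1), oneForm n f * η = c ⊗ₜ topLam n := by
  suffices OmegaComp n n q ≤ ((Shom n (q + d - n - 1)).map
      ((TensorProduct.mk ℂ (SP n) (Lam n)).flip (topLam n))).comap
      (LinearMap.mulLeft ℂ (oneForm n f)) by
    obtain ⟨c, hc, hηc⟩ := this hη
    exact ⟨c, hc, hηc.symm⟩
  rw [OmegaComp, Submodule.span_le]
  rintro _ ⟨m, a, s, hm, ha, hs, rfl⟩
  obtain rfl : n = m := by exact_mod_cast hm.symm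
  obtain ⟨i, rfl⟩ := hs.exists_eq_succAbove
  refine ⟨(-1 : ℂ) ^ (i : ℕ) • (pderiv i f * a), Submodule.smul_mem _ _ ?_, ?_⟩
  · rw [mul_comm]
    convert mul_mem_Shom ha (hf.pderiv (i := i)) using 2
    push_cast [hd]; ring
  · exact (oneForm_mul_tmul_omitLam f a i).symm

end OmegaComp

section Decomposition

variable {n d : ℕ} {f : SP n}

abbrev eulerMultiples (n d : ℕ) : Submodule ℂ (Om n) :=
  (Shom n ((d : ℤ) - n - 1)).map (mulEulerForm n)

abbrev dfAnnihilated (n d : ℕ) (f : SP n) : Submodule ℂ (Om n) :=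
  OmegaComp n n d ⊓ LinearMap.ker (LinearMap.mulLeft ℂ (oneForm n f))

/-- `{ η ∈ Ω^n_d : f divides df ∧ η }`, divisibility meaning membership in `f·Ω`. -/
abbrev dfDivisible (n d : ℕ) (f : SP n) : Submodule ℂ (Om n) :=
  OmegaComp n n d ⊓ (LinearMap.range (LinearMap.mulLeft ℂ (f ⊗ₜ[ℂ] (1 : Lam n)))).comap
    (LinearMap.mulLeft ℂ (oneForm n f))

theorem eulerMultiples_le_dfDivisible (hf : f.IsHomogeneous d) :
    eulerMultiples n d ≤ dfDivisible n d f := by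
  rintro _ ⟨g, hg, rfl⟩
  refine ⟨map_mulEulerForm_le_OmegaComp d ⟨g, hg, rfl⟩, (d : ℂ) • (g ⊗ₜ[ℂ] topLam n), ?_⟩
  simp only [LinearMap.mulLeft_apply, mul_smul_comm, Algebra.TensorProduct.tmul_mul_tmul, one_mul,
    oneForm_mul_mulEulerForm hf]

theorem dfAnnihilated_le_dfDivisible : dfAnnihilated n d f ≤ dfDivisible n d f :=
  inf_le_inf_left _ fun η hη => by simp [LinearMap.mem_ker.mp hη]

theorem eulerMultiples_inf_dfAnnihilated_eq_bot (hd : d ≠ 0) (hf0 : f ≠ 0)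
    (hf : f.IsHomogeneous d) :
    eulerMultiples n d ⊓ dfAnnihilated n d f = ⊥ := by
  rw [eq_bot_iff]
  rintro _ ⟨⟨g, -, rfl⟩, -, hker⟩
  have hfg : (d : ℂ) • ((f * g) ⊗ₜ[ℂ] topLam n) = 0 := by
    rw [← oneForm_mul_mulEulerForm hf]
    exact hker
  have hg : g = 0 := by
    have := congrArg (topCoeff n) hfg
    rw [map_smul, topCoeff_tmul_topLam, map_zero, smul_eq_zero] at this
    simpa [hd, hf0] using this
  simp [hg]

theorem dfDivisible_le_eulerMultiples_sup_dfAnnihilated (hd : 1 ≤ d) (hf : f.IsHomogeneous d) :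
    dfDivisible n d f ≤ eulerMultiples n d ⊔ dfAnnihilated n d f := by
  rintro η ⟨hη, μ, hμ⟩
  obtain ⟨c, hc, hηc⟩ := exists_oneForm_mul_eq_tmul_topLam hd hf hη
  have hfc : c = f * topCoeff n μ := by
    have := congrArg (topCoeff n) hμ
    rwa [LinearMap.mulLeft_apply, LinearMap.mulLeft_apply, topCoeff_tmul_one_mul, hηc,
      topCoeff_tmul_topLam, eq_comm] at this
  obtain ⟨h, hh, rfl⟩ := exists_mem_Shom_eq_mul hf hc hfc
  have hd0 : (d : ℂ) ≠ 0 := by exact_mod_cast (by omega : d ≠ 0)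
  set g := (d : ℂ)⁻¹ • h
  have hg : g ∈ Shom n ((d : ℤ) - n - 1) := by
    refine Submodule.smul_mem _ _ ?_
    convert hh using 2
    ring
  have hdfg : oneForm n f * mulEulerForm n g = oneForm n f * η := by
    rw [oneForm_mul_mulEulerForm hf, hηc, mul_smul_comm, ← TensorProduct.smul_tmul', smul_smul,
      mul_inv_cancel₀ hd0, one_smul]
  refine Submodule.mem_sup.mpr ⟨_, ⟨g, hg, rfl⟩, η - mulEulerForm n g,
    ⟨sub_mem hη (map_mulEulerForm_le_OmegaComp d ⟨g, hg, rfl⟩), ?_⟩, add_sub_cancel _ _⟩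
  simp [mul_sub, hdfg]

theorem eulerMultiples_sup_dfAnnihilated (hd : 1 ≤ d) (hf : f.IsHomogeneous d) :
    eulerMultiples n d ⊔ dfAnnihilated n d f = dfDivisible n d f :=
  le_antisymm (sup_le (eulerMultiples_le_dfDivisible hf) dfAnnihilated_le_dfDivisible)
    (dfDivisible_le_eulerMultiples_sup_dfAnnihilated hd hf)

end Decomposition

theorem stmt6_general (n : ℕ) (d : ℕ) (hd : 1 ≤ d) (f : SP n) (hf0 : f ≠ 0)
    (hf : f.IsHomogeneous d) :
    (Submodule.map
        ((omegaR n).comp (LinearMap.pi fun i => LinearMap.mulRight ℂ (MvPolynomial.X i)))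
        (Shom n ((d : ℤ) - n - 1)) ≤
      OmegaComp n n d ⊓ Submodule.comap (LinearMap.mulLeft ℂ (oneForm n f))
        (LinearMap.range (LinearMap.mulLeft ℂ (f ⊗ₜ[ℂ] (1 : Lam n))))) ∧
    (OmegaComp n n d ⊓ LinearMap.ker (LinearMap.mulLeft ℂ (oneForm n f)) ≤
      OmegaComp n n d ⊓ Submodule.comap (LinearMap.mulLeft ℂ (oneForm n f))
        (LinearMap.range (LinearMap.mulLeft ℂ (f ⊗ₜ[ℂ] (1 : Lam n))))) ∧
    (Submodule.map
        ((omegaR n).comp (LinearMap.pi fun i => LinearMap.mulRight ℂ (MvPolynomial.X i)))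
        (Shom n ((d : ℤ) - n - 1)) ⊓
      (OmegaComp n n d ⊓ LinearMap.ker (LinearMap.mulLeft ℂ (oneForm n f))) = ⊥) ∧
    (Submodule.map
        ((omegaR n).comp (LinearMap.pi fun i => LinearMap.mulRight ℂ (MvPolynomial.X i)))
        (Shom n ((d : ℤ) - n - 1)) ⊔
      (OmegaComp n n d ⊓ LinearMap.ker (LinearMap.mulLeft ℂ (oneForm n f))) =
      OmegaComp n n d ⊓ Submodule.comap (LinearMap.mulLeft ℂ (oneForm n f))
        (LinearMap.range (LinearMap.mulLeft ℂ (f ⊗ₜ[ℂ] (1 : Lam n))))) :=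
  ⟨eulerMultiples_le_dfDivisible hf, dfAnnihilated_le_dfDivisible,
    eulerMultiples_inf_dfAnnihilated_eq_bot (by omega) hf0 hf,
    eulerMultiples_sup_dfAnnihilated hd hf⟩

/-- for `f` nonzero homogeneous of degree `d ≥ 1`, the `ℂ`-vector space
`{ η ∈ Ω^n_d : f divides every coefficient of df ∧ η }` is the internal direct sum of
its two subspaces `{ h·ω_n : h ∈ S_{d−n−1} }` and `{ η ∈ Ω^n_d : df ∧ η = 0 }`
(where `f` dividing a form coefficientwise means the form lies in `f·Ω`). -/
theorem stmt6 (n : ℕ) (hn : 1 ≤ n) (d : ℕ) (hd : 1 ≤ d) (f : SP n) (hf0 : f ≠ 0)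
    (hf : f.IsHomogeneous d) :
    (Submodule.map
        ((omegaR n).comp (LinearMap.pi fun i => LinearMap.mulRight ℂ (MvPolynomial.X i)))
        (Shom n ((d : ℤ) - n - 1)) ≤
      OmegaComp n n d ⊓ Submodule.comap (LinearMap.mulLeft ℂ (oneForm n f))
        (LinearMap.range (LinearMap.mulLeft ℂ (f ⊗ₜ[ℂ] (1 : Lam n))))) ∧
    (OmegaComp n n d ⊓ LinearMap.ker (LinearMap.mulLeft ℂ (oneForm n f)) ≤
      OmegaComp n n d ⊓ Submodule.comap (LinearMap.mulLeft ℂ (oneForm n f))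
        (LinearMap.range (LinearMap.mulLeft ℂ (f ⊗ₜ[ℂ] (1 : Lam n))))) ∧
    (Submodule.map
        ((omegaR n).comp (LinearMap.pi fun i => LinearMap.mulRight ℂ (MvPolynomial.X i)))
        (Shom n ((d : ℤ) - n - 1)) ⊓
      (OmegaComp n n d ⊓ LinearMap.ker (LinearMap.mulLeft ℂ (oneForm n f))) = ⊥) ∧
    (Submodule.map
        ((omegaR n).comp (LinearMap.pi fun i => LinearMap.mulRight ℂ (MvPolynomial.X i)))
        (Shom n ((d : ℤ) - n - 1)) ⊔
      (OmegaComp n n d ⊓ LinearMap.ker (LinearMap.mulLeft ℂ (oneForm n f))) =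
      OmegaComp n n d ⊓ Submodule.comap (LinearMap.mulLeft ℂ (oneForm n f))
        (LinearMap.range (LinearMap.mulLeft ℂ (f ⊗ₜ[ℂ] (1 : Lam n))))) :=
  stmt6_general n d hd f hf0 hf

end
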